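/- Let (Ω, F, μ) be a σ-finite measure space, H a separable real Hilbert space, and (f_ω)_{ω∈Ω} proper lsc convex functions on H satisfying the integrability assumptions: ω ↦ f_ω(x(ω)) is measurable for each x ∈ L², there is r ∈ L² with ω ↦ f_ω(r(ω)) integrable, and there is an L² affine minorant. Define f(x) = ∫_Ω f_ω(x(ω)) dμ(ω) on L²(Ω, μ; H). Then the Legendre–Fenchel conjugate satisfies f*(x*) = ∫_Ω f_ω*(x*(ω)) dμ(ω) for every x* ∈ L²(Ω, μ; H). -/

import Mathlib

open MeasureTheory RealInnerProductSpace

/-- `f : H → EReal` is proper, lower semicontinuous, and convex. -/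
def ProperLscConvex {H : Type*} [NormedAddCommGroup H] [InnerProductSpace ℝ H]
    (f : H → EReal) : Prop :=
  (∃ x, f x ≠ ⊤) ∧ (∀ x, f x ≠ ⊥) ∧ LowerSemicontinuous f ∧
    ∀ x y : H, ∀ t : ℝ, 0 ≤ t → t ≤ 1 →
      f (t • x + (1 - t) • y) ≤ (t : EReal) * f x + ((1 - t : ℝ) : EReal) * f y

/-- `p` is the proximal point of `g` at `u` with index `γ`. -/
def IsProxPt {H : Type*} [NormedAddCommGroup H] [InnerProductSpace ℝ H]
    (γ : ℝ) (g : H → EReal) (u p : H) : Prop :=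
  ∀ v : H, g p + ((‖u - p‖ ^ 2 / (2 * γ) : ℝ) : EReal) ≤
    g v + ((‖u - v‖ ^ 2 / (2 * γ) : ℝ) : EReal)

/-- The integral functional `x ↦ ∫ f_ω(x(ω)) dμ(ω)`, with the convention that the
integral is `+∞` unless the integrand is a.e. finite and integrable. -/
noncomputable def intFun {Ω H : Type*} [MeasurableSpace Ω] (μ : Measure Ω)
    [NormedAddCommGroup H] [InnerProductSpace ℝ H]
    (f : Ω → H → EReal) (x : Ω → H) : EReal :=
  open scoped Classical in
  if (∀ᵐ ω ∂μ, f ω (x ω) ≠ ⊤) ∧ Integrable (fun ω => (f ω (x ω)).toReal) μ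
  then ((∫ ω, (f ω (x ω)).toReal ∂μ : ℝ) : EReal) else ⊤

/-- The Legendre–Fenchel conjugate of an extended-real-valued function. -/
noncomputable def conjFn {H : Type*} [NormedAddCommGroup H] [InnerProductSpace ℝ H]
    (g : H → EReal) (u' : H) : EReal :=
  ⨆ u : H, ((⟪u, u'⟫ : ℝ) : EReal) - g u

/-!
`≤` is the Fenchel–Young inequality `⟪x, x'⟫ - f_ω x ≤ f_ω* x'`, integrated.

For `≥`, test the supremum with `x = P ∘ D`, `D ∈ L²`. The prox inequality gives
`⟪v, y⟫ - f v ≤ ⟪P (v + y), y⟫ - f (P (v + y))`, so the continuous map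
`u ↦ ⟪P u, y⟫ - f (P u)` has supremum `f* y`, already along any dense sequence. Constants of a
dense sequence, truncated to a σ-finite exhaustion and glued by measurable pointwise maxima, give
`D_n ∈ L²` whose integrands increase a.e. to `f_ω* (x' ω)`; monotone convergence concludes.

The hypotheses do not make `ω ↦ f_ω (P_ω (u ω))` measurable directly. It equals the Moreau
envelope minus `‖u - P u‖² / 2`; increments of the envelope are limits of Riemann sums of its
gradient `id - P`, and by Fenchel–Moreau its value at `r` is `f_ω (r ω)` minus a countable
supremum of increments. The affine minorant and `f (P u) ≤ f r + ‖u - r‖² / 2` make it integrable.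
-/

open Filter Topology
open scoped ENNReal

section MoreauEnvelope

variable {H : Type*} [NormedAddCommGroup H] [InnerProductSpace ℝ H]

/-- The Moreau envelope `inf_v f v + ‖u - v‖² / 2`, written through a proximal map `P` of `f`. -/
noncomputable def moreauEnv (f : H → EReal) (P : H → H) (u : H) : ℝ :=
  (f (P u)).toReal + ‖u - P u‖ ^ 2 / 2

namespace ProperLscConvex

variable {f : H → EReal} {P : H → H}

theorem coe_toReal (hf : ProperLscConvex f) {x : H} (hx : f x ≠ ⊤) :
    ((f x).toReal : EReal) = f x :=
  EReal.coe_toReal hx (hf.2.1 x)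

theorem toReal_le_of_le_coe (hf : ProperLscConvex f) {x : H} {a : ℝ} (h : f x ≤ a) :
    (f x).toReal ≤ a := by
  have hx : f x ≠ ⊤ := ne_top_of_le_ne_top (EReal.coe_ne_top a) h
  rwa [← hf.coe_toReal hx, EReal.coe_le_coe_iff] at h

theorem le_convexComb (hf : ProperLscConvex f) {x y : H} (hx : f x ≠ ⊤) (hy : f y ≠ ⊤)
    {t : ℝ} (h0 : 0 ≤ t) (h1 : t ≤ 1) :
    f (t • x + (1 - t) • y) ≤ ((t * (f x).toReal + (1 - t) * (f y).toReal : ℝ) : EReal) := by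
  simpa only [EReal.coe_add, EReal.coe_mul, hf.coe_toReal hx, hf.coe_toReal hy]
    using hf.2.2.2 x y t h0 h1

theorem prox_ne_top (hf : ProperLscConvex f) (hP : ∀ u, IsProxPt 1 f u (P u)) (u : H) :
    f (P u) ≠ ⊤ := by
  obtain ⟨x, hx⟩ := hf.1
  intro htop
  have h := hP u x
  rw [htop, EReal.top_add_of_ne_bot (EReal.coe_ne_bot _), top_le_iff] at h
  exact (EReal.add_lt_top hx (EReal.coe_ne_top _)).ne h

theorem moreauEnv_le (hf : ProperLscConvex f) (hP : ∀ u, IsProxPt 1 f u (P u)) (u : H)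
    {v : H} (hv : f v ≠ ⊤) : moreauEnv f P u ≤ (f v).toReal + ‖u - v‖ ^ 2 / 2 := by
  have h := hP u v
  rw [← hf.coe_toReal (hf.prox_ne_top hP u), ← hf.coe_toReal hv, ← EReal.coe_add,
    ← EReal.coe_add, EReal.coe_le_coe_iff, mul_one] at h
  exact h

theorem toReal_prox_add_inner_le (hf : ProperLscConvex f) (hP : ∀ u, IsProxPt 1 f u (P u))
    (u : H) {v : H} (hv : f v ≠ ⊤) :
    (f (P u)).toReal + ⟪u - P u, v - P u⟫ ≤ (f v).toReal := by
  set p := P u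
  have hp := hf.prox_ne_top hP u
  have key : ∀ t ∈ Set.Ioc (0 : ℝ) 1,
      (f p).toReal + ⟪u - p, v - p⟫ ≤ (f v).toReal + t * (‖v - p‖ ^ 2 / 2) := by
    rintro t ⟨ht0, ht1⟩
    have hconv := hf.le_convexComb hv hp ht0.le ht1
    have hprox := hf.moreauEnv_le hP u (ne_top_of_le_ne_top (EReal.coe_ne_top _) hconv)
    have hsq : ‖u - (t • v + (1 - t) • p)‖ ^ 2
        = ‖u - p‖ ^ 2 - 2 * t * ⟪u - p, v - p⟫ + t ^ 2 * ‖v - p‖ ^ 2 := by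
      rw [show u - (t • v + (1 - t) • p) = (u - p) - t • (v - p) by module, norm_sub_sq_real,
        real_inner_smul_right, norm_smul, Real.norm_of_nonneg ht0.le]
      ring
    have := hf.toReal_le_of_le_coe hconv
    rw [moreauEnv, hsq] at hprox
    nlinarith
  have hlim : Tendsto (fun t : ℝ => (f v).toReal + t * (‖v - p‖ ^ 2 / 2)) (𝓝[>] 0)
      (𝓝 (f v).toReal) :=
    tendsto_nhdsWithin_of_tendsto_nhds ((by fun_prop : Continuous fun t : ℝ =>
      (f v).toReal + t * (‖v - p‖ ^ 2 / 2)).tendsto' 0 _ (by simp))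
  exact ge_of_tendsto hlim (eventually_of_mem (Ioc_mem_nhdsGT one_pos) key)

theorem abs_moreauEnv_sub_sub_inner_le (hf : ProperLscConvex f)
    (hP : ∀ u, IsProxPt 1 f u (P u)) (u w : H) :
    |moreauEnv f P u - moreauEnv f P w - ⟪u - w, w - P w⟫| ≤ ‖u - w‖ ^ 2 / 2 := by
  have hlow := hf.toReal_prox_add_inner_le hP w (hf.prox_ne_top hP u)
  have hup := hf.moreauEnv_le hP u (hf.prox_ne_top hP w)
  have hsplit : ⟪u - w, w - P w⟫
      = ⟪u - P u, w - P w⟫ - ‖w - P w‖ ^ 2 + ⟪w - P w, P u - P w⟫ := by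
    rw [← real_inner_self_eq_norm_sq, real_inner_comm (P u - P w) (w - P w),
      ← inner_sub_left, ← inner_add_left]
    congr 1
    abel
  have hsq : ‖u - P w‖ ^ 2 = ‖u - w‖ ^ 2 + 2 * ⟪u - w, w - P w⟫ + ‖w - P w‖ ^ 2 := by
    rw [show u - P w = (u - w) + (w - P w) by abel, norm_add_sq_real]
  have hdiff := norm_sub_sq_real (u - P u) (w - P w)
  rw [moreauEnv] at hup
  rw [abs_le, moreauEnv, moreauEnv]
  constructor <;> nlinarith [sq_nonneg ‖(u - P u) - (w - P w)‖, sq_nonneg ‖u - w‖]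

theorem norm_prox_sub_le (hf : ProperLscConvex f) (hP : ∀ u, IsProxPt 1 f u (P u)) (u w : H) :
    ‖P u - P w‖ ≤ ‖u - w‖ := by
  have h₁ := hf.toReal_prox_add_inner_le hP u (hf.prox_ne_top hP w)
  have h₂ := hf.toReal_prox_add_inner_le hP w (hf.prox_ne_top hP u)
  have hmono : ‖P u - P w‖ ^ 2 ≤ ⟪u - w, P u - P w⟫ := by
    have e₁ : ⟪u - P u, P w - P u⟫ = -⟪u - P u, P u - P w⟫ := by
      rw [← inner_neg_right, neg_sub]
    have e₂ : ⟪u - w, P u - P w⟫ - ‖P u - P w‖ ^ 2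
        = ⟪u - P u, P u - P w⟫ - ⟪w - P w, P u - P w⟫ := by
      rw [← real_inner_self_eq_norm_sq, ← inner_sub_left, ← inner_sub_left]
      congr 1
      abel
    linarith
  rcases (norm_nonneg (P u - P w)).eq_or_lt with h | h
  · rw [← h]
    exact norm_nonneg _
  · refine le_of_mul_le_mul_right ?_ h
    nlinarith [real_inner_le_norm (u - w) (P u - P w)]

theorem lipschitzWith_prox (hf : ProperLscConvex f) (hP : ∀ u, IsProxPt 1 f u (P u)) :
    LipschitzWith 1 P :=
  LipschitzWith.of_dist_le_mul fun u w => by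
    simpa [dist_eq_norm] using hf.norm_prox_sub_le hP u w

theorem continuous_moreauEnv (hf : ProperLscConvex f) (hP : ∀ u, IsProxPt 1 f u (P u)) :
    Continuous (moreauEnv f P) := by
  refine continuous_iff_continuousAt.2 fun w => ?_
  have hsq : Tendsto (fun u => ‖u - w‖ ^ 2 / 2) (𝓝 w) (𝓝 0) :=
    (by fun_prop : Continuous fun u : H => ‖u - w‖ ^ 2 / 2).tendsto' w 0 (by simp)
  have hlin : Tendsto (fun u => ⟪u - w, w - P w⟫) (𝓝 w) (𝓝 0) :=
    (by fun_prop : Continuous fun u : H => ⟪u - w, w - P w⟫).tendsto' w 0 (by simp)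
  have hrem := squeeze_zero_norm
    (fun u => (Real.norm_eq_abs _).trans_le (hf.abs_moreauEnv_sub_sub_inner_le hP u w)) hsq
  rw [ContinuousAt]
  simpa using (hrem.add hlin).add_const (moreauEnv f P w)

theorem continuous_toReal_comp_prox (hf : ProperLscConvex f)
    (hP : ∀ u, IsProxPt 1 f u (P u)) : Continuous fun u => (f (P u)).toReal := by
  have hPc := (hf.lipschitzWith_prox hP).continuous
  have : Continuous fun u => moreauEnv f P u - ‖u - P u‖ ^ 2 / 2 :=
    (hf.continuous_moreauEnv hP).sub (by fun_prop)
  simpa [moreauEnv] using this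

/-- A Riemann sum for the gradient `id - P` of the envelope along the segment from `a` to `b`. -/
theorem abs_moreauEnv_sub_sub_sum_le (hf : ProperLscConvex f)
    (hP : ∀ u, IsProxPt 1 f u (P u)) (a b : H) {n : ℕ} (hn : 0 < n) :
    |moreauEnv f P b - moreauEnv f P a - ∑ i ∈ Finset.range n,
        ⟪(n : ℝ)⁻¹ • (b - a), (a + (i / n : ℝ) • (b - a)) - P (a + (i / n : ℝ) • (b - a))⟫|
      ≤ ‖b - a‖ ^ 2 / (2 * n) := by
  set δ : H := (n : ℝ)⁻¹ • (b - a)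
  set γ : ℕ → H := fun i => a + (i / n : ℝ) • (b - a)
  have hn' : (n : ℝ) ≠ 0 := by positivity
  have hstep : ∀ i, γ (i + 1) - γ i = δ := fun i => by
    simp only [γ, δ, Nat.cast_succ, add_div, add_smul, one_div]
    abel
  have htel : moreauEnv f P b - moreauEnv f P a
      = ∑ i ∈ Finset.range n, (moreauEnv f P (γ (i + 1)) - moreauEnv f P (γ i)) := by
    rw [Finset.sum_range_sub (fun i => moreauEnv f P (γ i))]
    simp [γ, hn']
  have hδ : ‖δ‖ ^ 2 = ‖b - a‖ ^ 2 / n ^ 2 := by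
    rw [norm_smul, norm_inv, Real.norm_natCast, mul_pow, inv_pow, inv_mul_eq_div]
  calc _ = |∑ i ∈ Finset.range n,
          (moreauEnv f P (γ (i + 1)) - moreauEnv f P (γ i) - ⟪δ, γ i - P (γ i)⟫)| := by
        rw [htel, ← Finset.sum_sub_distrib]
    _ ≤ ∑ _i ∈ Finset.range n, ‖δ‖ ^ 2 / 2 := by
        refine (Finset.abs_sum_le_sum_abs _ _).trans (Finset.sum_le_sum fun i _ => ?_)
        simpa [hstep i] using hf.abs_moreauEnv_sub_sub_inner_le hP (γ (i + 1)) (γ i)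
    _ = ‖b - a‖ ^ 2 / (2 * n) := by
        rw [Finset.sum_const, Finset.card_range, nsmul_eq_mul, hδ]
        field_simp

theorem isClosed_epigraph (hf : ProperLscConvex f) :
    IsClosed {p : H × ℝ | f p.1 ≤ p.2} :=
  hf.2.2.1.isClosed_epigraph.preimage
    (continuous_fst.prodMk (continuous_coe_real_ereal.comp continuous_snd))

theorem convex_epigraph (hf : ProperLscConvex f) :
    Convex ℝ {p : H × ℝ | f p.1 ≤ p.2} := by
  rintro ⟨x, s⟩ hx ⟨y, t⟩ hy a b ha hb hab
  obtain rfl : b = 1 - a := by linarith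
  simp only [Set.mem_ofPred_eq, Prod.fst_add, Prod.snd_add, Prod.smul_fst, Prod.smul_snd,
    smul_eq_mul] at hx hy ⊢
  have hxs := hf.toReal_le_of_le_coe hx
  have hyt := hf.toReal_le_of_le_coe hy
  refine (hf.le_convexComb (ne_top_of_le_ne_top (EReal.coe_ne_top _) hx)
    (ne_top_of_le_ne_top (EReal.coe_ne_top _) hy) ha (by linarith)).trans
    (EReal.coe_le_coe_iff.2 ?_)
  nlinarith

/-- Hahn–Banach: separate `(x, α)` from the closed convex epigraph. -/
theorem exists_affine_minorant_gt [CompleteSpace H] (hf : ProperLscConvex f) {x : H}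
    (hx : f x ≠ ⊤) {α : ℝ} (hα : (α : EReal) < f x) :
    ∃ w : H, ∃ β : ℝ, (∀ v, ((⟪v, w⟫ + β : ℝ) : EReal) ≤ f v) ∧ α < ⟪x, w⟫ + β := by
  obtain ⟨g, s, hgC, hgx⟩ := geometric_hahn_banach_closed_point hf.convex_epigraph
    hf.isClosed_epigraph (show (x, α) ∉ {p : H × ℝ | f p.1 ≤ p.2} from not_le.2 hα)
  set c := g (0, 1)
  set z := (InnerProductSpace.toDual ℝ H).symm (g.comp (ContinuousLinearMap.inl ℝ H ℝ))
  have hg : ∀ v t, g (v, t) = ⟪v, z⟫ + t * c := fun v t => by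
    rw [real_inner_comm, InnerProductSpace.toDual_symm_apply, ← smul_eq_mul, ← g.map_smul,
      ContinuousLinearMap.comp_apply, ContinuousLinearMap.inl_apply, ← map_add]
    simp
  have hgf : ∀ v, f v ≠ ⊤ → ⟪v, z⟫ + (f v).toReal * c < s := fun v hv => by
    rw [← hg]
    exact hgC _ (hf.coe_toReal hv).ge
  have hfx := hgf x hx
  rw [hg] at hgx
  have hαx : α < (f x).toReal := by rwa [← hf.coe_toReal hx, EReal.coe_lt_coe_iff] at hα
  have hc : c < 0 := by nlinarith
  have hform : ∀ v, ⟪v, (-c⁻¹) • z⟫ + s / c = (s - ⟪v, z⟫) / c := fun v => by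
    rw [real_inner_smul_right]
    field_simp
    ring
  refine ⟨(-c⁻¹) • z, s / c, fun v => ?_, ?_⟩
  · rcases eq_or_ne (f v) ⊤ with hv | hv
    · simp [hv]
    · rw [hform, ← hf.coe_toReal hv, EReal.coe_le_coe_iff, div_le_iff_of_neg hc]
      linarith [hgf v hv]
  · rw [hform, lt_div_iff_of_neg hc]
    linarith

theorem exists_lt_moreauEnv_sub [CompleteSpace H] (hf : ProperLscConvex f)
    (hP : ∀ u, IsProxPt 1 f u (P u)) {x : H} (hx : f x ≠ ⊤) {α : ℝ} (hα : (α : EReal) < f x) :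
    ∃ u, α < moreauEnv f P u - ‖u - x‖ ^ 2 / 2 := by
  obtain ⟨w, β, hmin, hαx⟩ := hf.exists_affine_minorant_gt hx hα
  refine ⟨x + w, ?_⟩
  set p := P (x + w)
  have hp : ⟪p, w⟫ + β ≤ (f p).toReal := by
    rw [← EReal.coe_le_coe_iff, hf.coe_toReal (hf.prox_ne_top hP _)]
    exact hmin p
  have hsq : ‖x + w - p‖ ^ 2 = ‖x - p‖ ^ 2 + 2 * ⟪x - p, w⟫ + ‖w‖ ^ 2 := by
    rw [show x + w - p = (x - p) + w by abel, norm_add_sq_real]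
  rw [moreauEnv, add_sub_cancel_left, hsq, inner_sub_left]
  nlinarith [sq_nonneg ‖x - p‖]

/-- Without the restriction to a dense set this is Fenchel–Moreau for `f + ‖· - x‖² / 2`; the
envelope is continuous, so a dense set of directions suffices. -/
theorem ciSup_moreauEnv_add_sub [CompleteSpace H] (hf : ProperLscConvex f)
    (hP : ∀ u, IsProxPt 1 f u (P u)) {ι : Type*} [Nonempty ι] {z : ι → H} (hz : DenseRange z)
    {x : H} (hx : f x ≠ ⊤) :
    ⨆ k, (moreauEnv f P (x + z k) - moreauEnv f P x - ‖z k‖ ^ 2 / 2)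
      = (f x).toReal - moreauEnv f P x := by
  refine ciSup_eq_of_forall_le_of_forall_lt_exists_gt (fun k => ?_) fun α hα => ?_
  · have := hf.moreauEnv_le hP (x + z k) hx
    rw [add_sub_cancel_left] at this
    linarith
  · obtain ⟨u, hu⟩ := hf.exists_lt_moreauEnv_sub hP hx (α := α + moreauEnv f P x)
      (by rw [← hf.coe_toReal hx, EReal.coe_lt_coe_iff]; linarith)
    have hcont : Continuous fun d => moreauEnv f P (x + d) - moreauEnv f P x - ‖d‖ ^ 2 / 2 :=
      (((hf.continuous_moreauEnv hP).comp (continuous_const_add x)).sub continuous_const).sub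
        (by fun_prop)
    exact hz.exists_mem_open (isOpen_lt continuous_const hcont)
      ⟨u - x, by simp only [Set.mem_ofPred_eq, add_sub_cancel]; linarith⟩

theorem inner_sub_le_conjFn (hf : ProperLscConvex f) {x : H} (hx : f x ≠ ⊤) (y : H) :
    ((⟪x, y⟫ - (f x).toReal : ℝ) : EReal) ≤ conjFn f y := by
  rw [EReal.coe_sub, hf.coe_toReal hx]
  exact le_iSup (fun v => ((⟪v, y⟫ : ℝ) : EReal) - f v) x

theorem inner_sub_le_inner_prox_sub (hf : ProperLscConvex f) (hP : ∀ u, IsProxPt 1 f u (P u))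
    {v : H} (hv : f v ≠ ⊤) (y : H) :
    ⟪v, y⟫ - (f v).toReal ≤ ⟪P (v + y), y⟫ - (f (P (v + y))).toReal := by
  have h := hf.moreauEnv_le hP (v + y) hv
  set p := P (v + y)
  have hsq : ‖v + y - p‖ ^ 2 = ‖v - p‖ ^ 2 + 2 * ⟪v - p, y⟫ + ‖y‖ ^ 2 := by
    rw [show v + y - p = (v - p) + y by abel, norm_add_sq_real]
  rw [moreauEnv, hsq, add_sub_cancel_left, inner_sub_left] at h
  nlinarith [sq_nonneg ‖v - p‖]

theorem iSup_inner_prox_sub_eq_conjFn (hf : ProperLscConvex f)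
    (hP : ∀ u, IsProxPt 1 f u (P u)) {ι : Type*} {z : ι → H} (hz : DenseRange z) (y : H) :
    ⨆ k, ((⟪P (z k), y⟫ - (f (P (z k))).toReal : ℝ) : EReal) = conjFn f y := by
  refine le_antisymm (iSup_le fun k => hf.inner_sub_le_conjFn (hf.prox_ne_top hP _) y)
    (iSup_le fun v => ?_)
  rcases eq_or_ne (f v) ⊤ with hv | hv
  · simp [hv]
  refine le_of_forall_lt fun b hb => ?_
  have hcont : Continuous fun u => ((⟪P u, y⟫ - (f (P u)).toReal : ℝ) : EReal) :=
    continuous_coe_real_ereal.comp ((((hf.lipschitzWith_prox hP).continuous).inner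
      continuous_const).sub (hf.continuous_toReal_comp_prox hP))
  have hvy : b < ((⟪P (v + y), y⟫ - (f (P (v + y))).toReal : ℝ) : EReal) := by
    refine hb.trans_le ?_
    rw [← hf.coe_toReal hv, ← EReal.coe_sub, EReal.coe_le_coe_iff]
    exact hf.inner_sub_le_inner_prox_sub hP hv y
  obtain ⟨k, hk⟩ := hz.exists_mem_open (isOpen_lt continuous_const hcont) ⟨v + y, hvy⟩
  exact hk.trans_le (le_iSup (fun k => ((⟪P (z k), y⟫ - (f (P (z k))).toReal : ℝ) : EReal)) k)

end ProperLscConvex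

end MoreauEnvelope

section MeasureTheory

variable {Ω : Type*} [MeasurableSpace Ω] {μ : Measure Ω}

theorem integrable_inner_of_memLp {H : Type*} [NormedAddCommGroup H] [InnerProductSpace ℝ H]
    {a b : Ω → H} (ha : MemLp a 2 μ) (hb : MemLp b 2 μ) :
    Integrable (fun ω => ⟪a ω, b ω⟫) μ :=
  (ha.norm.integrable_mul hb.norm).mono' (ha.1.inner hb.1) (Eventually.of_forall fun ω => by
    rw [Real.norm_eq_abs]
    exact abs_real_inner_le_norm _ _)

theorem tendsto_toReal_iSup_coe {a : ℕ → ℝ} (ha : Monotone a)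
    (htop : ⨆ j, (a j : EReal) ≠ ⊤) : Tendsto a atTop (𝓝 (⨆ j, (a j : EReal)).toReal) := by
  have hbot : ⨆ j, (a j : EReal) ≠ ⊥ :=
    ne_bot_of_le_ne_bot (EReal.coe_ne_bot (a 0)) (le_iSup (fun j => (a j : EReal)) 0)
  rw [← EReal.tendsto_coe, EReal.coe_toReal htop hbot]
  exact tendsto_atTop_iSup fun i j hij => EReal.coe_le_coe_iff.2 (ha hij)

theorem iSup_coe_partialSups (a : ℕ → ℝ) :
    ⨆ n, ((partialSups a n : ℝ) : EReal) = ⨆ n, (a n : EReal) := by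
  rw [← iSup_partialSups_eq fun n => (a n : EReal)]
  congr 1
  ext n
  induction n with
  | zero => simp
  | succ n ih =>
    rw [← Order.succ_eq_add_one, partialSups_succ, partialSups_succ, ← ih]
    exact EReal.coe_strictMono.monotone.map_max

theorem lintegral_iSup_ofReal_sub_ne_top {h : ℕ → Ω → ℝ} (hint : ∀ j, Integrable (h j) μ)
    (hmono : ∀ᵐ ω ∂μ, Monotone fun j => h j ω) {C : ℝ} (hC : ∀ j, ∫ ω, h j ω ∂μ ≤ C) :
    ∫⁻ ω, ⨆ j, ENNReal.ofReal (h j ω - h 0 ω) ∂μ ≠ ⊤ := by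
  rw [lintegral_iSup' (f := fun j ω => ENNReal.ofReal (h j ω - h 0 ω))
    (fun j => ((hint j).sub (hint 0)).aemeasurable.ennreal_ofReal)
    (by filter_upwards [hmono] with ω hω i j hij using
      ENNReal.ofReal_le_ofReal (sub_le_sub_right (hω hij) _))]
  refine ne_top_of_le_ne_top (ENNReal.ofReal_ne_top (r := C - ∫ ω, h 0 ω ∂μ))
    (iSup_le fun j => ?_)
  have hinc : ∀ᵐ ω ∂μ, 0 ≤ h j ω - h 0 ω := by
    filter_upwards [hmono] with ω hω using sub_nonneg.2 (hω (Nat.zero_le j))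
  rw [← ofReal_integral_eq_lintegral_ofReal (f := fun ω => h j ω - h 0 ω)
    ((hint j).sub (hint 0)) hinc, integral_sub (hint j) (hint 0)]
  exact ENNReal.ofReal_le_ofReal (sub_le_sub_right (hC j) _)

theorem ae_ne_top_and_integrable_of_integral_le {h : ℕ → Ω → ℝ}
    (hint : ∀ j, Integrable (h j) μ) (hmono : ∀ᵐ ω ∂μ, Monotone fun j => h j ω)
    {g : Ω → EReal} (hsup : ∀ᵐ ω ∂μ, ⨆ j, (h j ω : EReal) = g ω) {C : ℝ}
    (hC : ∀ j, ∫ ω, h j ω ∂μ ≤ C) :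
    (∀ᵐ ω ∂μ, g ω ≠ ⊤) ∧ Integrable (fun ω => (g ω).toReal) μ := by
  set G : Ω → ℝ≥0∞ := fun ω => ⨆ j, ENNReal.ofReal (h j ω - h 0 ω)
  have hGm : AEMeasurable G μ :=
    AEMeasurable.iSup fun j => ((hint j).sub (hint 0)).aemeasurable.ennreal_ofReal
  have hG := lintegral_iSup_ofReal_sub_ne_top hint hmono hC
  have hbound : ∀ᵐ ω ∂μ, ∀ j, h j ω ≤ h 0 ω + (G ω).toReal := by
    filter_upwards [ae_lt_top' hGm hG, hmono] with ω hGω hω j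
    have := ENNReal.toReal_mono hGω.ne (le_iSup (fun j => ENNReal.ofReal (h j ω - h 0 ω)) j)
    rw [ENNReal.toReal_ofReal (sub_nonneg.2 (hω (Nat.zero_le j)))] at this
    linarith
  have hgtop : ∀ᵐ ω ∂μ, g ω ≠ ⊤ := by
    filter_upwards [hsup, hbound] with ω hω hb
    exact hω ▸ ne_top_of_le_ne_top (EReal.coe_ne_top (h 0 ω + (G ω).toReal))
      (iSup_le fun j => EReal.coe_le_coe_iff.2 (hb j))
  refine ⟨hgtop, ((hint 0).norm.add (integrable_toReal_of_lintegral_ne_top hGm hG)).mono'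
    ?_ ?_⟩
  · exact (((AEMeasurable.iSup fun j => (hint j).aemeasurable.coe_real_ereal).congr
      hsup).ereal_toReal).aestronglyMeasurable
  · filter_upwards [hsup, hbound, hgtop, hmono] with ω hω hb hg hm
    have hlim := tendsto_toReal_iSup_coe hm (hω ▸ hg)
    rw [hω] at hlim
    have hlow := hm.ge_of_tendsto hlim 0
    have hup := le_of_tendsto' hlim hb
    rw [Pi.add_apply, Real.norm_eq_abs, Real.norm_eq_abs, abs_le]
    constructor <;> linarith [neg_abs_le (h 0 ω), le_abs_self (h 0 ω),
      ENNReal.toReal_nonneg (a := G ω)]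

theorem iSup_integral_eq_intFun {H : Type*} [NormedAddCommGroup H] [InnerProductSpace ℝ H]
    {h : ℕ → Ω → ℝ} (hint : ∀ j, Integrable (h j) μ) (hmono : ∀ᵐ ω ∂μ, Monotone fun j => h j ω)
    {F : Ω → H → EReal} {x : Ω → H} (hsup : ∀ᵐ ω ∂μ, ⨆ j, (h j ω : EReal) = F ω (x ω)) :
    ⨆ j, ((∫ ω, h j ω ∂μ : ℝ) : EReal) = intFun μ F x := by
  have hmonoI : Monotone fun j => ((∫ ω, h j ω ∂μ : ℝ) : EReal) := fun i j hij =>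
    EReal.coe_le_coe_iff.2 (integral_mono_ae (hint i) (hint j)
      (by filter_upwards [hmono] with ω hω using hω hij))
  rw [intFun]
  split_ifs with hc
  · obtain ⟨hgtop, hgint⟩ := hc
    have hI := integral_tendsto_of_tendsto_of_monotone hint hgint hmono
      (by filter_upwards [hsup, hgtop, hmono] with ω hω hg hm
          simpa [hω] using tendsto_toReal_iSup_coe hm (hω ▸ hg))
    exact tendsto_nhds_unique (tendsto_atTop_iSup hmonoI) (EReal.tendsto_coe.2 hI)
  · by_contra hne
    have hC : ∀ j, ∫ ω, h j ω ∂μ ≤ (⨆ j, ((∫ ω, h j ω ∂μ : ℝ) : EReal)).toReal := fun j => by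
      rw [← EReal.coe_le_coe_iff, EReal.coe_toReal hne (ne_bot_of_le_ne_bot
        (EReal.coe_ne_bot _) (le_iSup (fun j => ((∫ ω, h j ω ∂μ : ℝ) : EReal)) 0))]
      exact le_iSup (fun j => ((∫ ω, h j ω ∂μ : ℝ) : EReal)) j
    exact hc (ae_ne_top_and_integrable_of_integral_le hint hmono hsup hC)

section Selection

variable {E : Type*} [NormedAddCommGroup E] {p : ℝ≥0∞}

theorem exists_memLp_seq_denseRange [SigmaFinite μ] [TopologicalSpace.SeparableSpace E] :
    ∃ e : ℕ → Ω → E, (∀ n, MemLp (e n) p μ) ∧ ∀ ω, DenseRange fun n => e n ω := by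
  obtain ⟨d, hd⟩ := TopologicalSpace.exists_dense_seq E
  refine ⟨fun n => (spanningSets μ n.unpair.1).indicator fun _ => d n.unpair.2,
    fun n => memLp_indicator_const p (measurableSet_spanningSets μ _) _
      (Or.inr (measure_spanningSets_lt_top μ _).ne), fun ω => hd.mono ?_⟩
  rintro _ ⟨k, rfl⟩
  refine ⟨Nat.pair (spanningSetsIndex μ ω) k, ?_⟩
  simp only [Nat.unpair_pair]
  exact Set.indicator_of_mem (mem_spanningSetsIndex μ ω) _

theorem exists_memLp_ae_eq_max {g : Ω → E → ℝ} {D₁ D₂ : Ω → E} (h₁ : MemLp D₁ p μ)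
    (h₂ : MemLp D₂ p μ) (hg₁ : AEMeasurable (fun ω => g ω (D₁ ω)) μ)
    (hg₂ : AEMeasurable (fun ω => g ω (D₂ ω)) μ) :
    ∃ D, MemLp D p μ ∧ ∀ᵐ ω ∂μ, g ω (D ω) = max (g ω (D₁ ω)) (g ω (D₂ ω)) := by
  classical
  set s := {ω | hg₁.mk _ ω < hg₂.mk _ ω}
  have hs : MeasurableSet s := measurableSet_lt hg₁.measurable_mk hg₂.measurable_mk
  refine ⟨s.piecewise D₂ D₁, (h₂.restrict s).piecewise hs (h₁.restrict sᶜ), ?_⟩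
  filter_upwards [hg₁.ae_eq_mk, hg₂.ae_eq_mk] with ω e₁ e₂
  by_cases hω : ω ∈ s
  · rw [s.piecewise_eq_of_mem _ _ hω, max_eq_right (by rw [e₁, e₂]; exact le_of_lt hω)]
  · rw [s.piecewise_eq_of_notMem _ _ hω, max_eq_left (by rw [e₁, e₂]; exact not_lt.1 hω)]

theorem exists_memLp_seq_ae_eq_partialSups {g : Ω → E → ℝ}
    (hg : ∀ D, MemLp D p μ → AEMeasurable (fun ω => g ω (D ω)) μ) {e : ℕ → Ω → E}
    (he : ∀ n, MemLp (e n) p μ) :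
    ∃ D : ℕ → Ω → E, (∀ n, MemLp (D n) p μ) ∧
      ∀ n, ∀ᵐ ω ∂μ, g ω (D n ω) = partialSups (fun k => g ω (e k ω)) n := by
  have key : ∀ n, ∃ D, MemLp D p μ ∧
      ∀ᵐ ω ∂μ, g ω (D ω) = partialSups (fun k => g ω (e k ω)) n := by
    intro n
    induction n with
    | zero => exact ⟨e 0, he 0, by simp⟩
    | succ n ih =>
      obtain ⟨D, hD, hDe⟩ := ih
      obtain ⟨D', hD', hD'e⟩ := exists_memLp_ae_eq_max hD (he (n + 1)) (hg D hD) (hg _ (he _))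
      refine ⟨D', hD', ?_⟩
      filter_upwards [hDe, hD'e] with ω h₁ h₂
      rw [h₂, h₁, ← Order.succ_eq_add_one, partialSups_succ]
  choose D hD hDe using key
  exact ⟨D, hD, hDe⟩

end Selection

end MeasureTheory

section IntegralFunctional

variable {Ω H : Type*} [MeasurableSpace Ω] {μ : Measure Ω}
  [NormedAddCommGroup H] [InnerProductSpace ℝ H] {f : Ω → H → EReal} {P : Ω → H → H}

theorem integral_inner_sub_intFun_le (hf : ∀ ω, ProperLscConvex (f ω)) {x x' : Ω → H}
    (hx : MemLp x 2 μ) (hx' : MemLp x' 2 μ) :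
    ((∫ ω, ⟪x ω, x' ω⟫ ∂μ : ℝ) : EReal) - intFun μ f x
      ≤ intFun μ (fun ω u => conjFn (f ω) u) x' := by
  rw [intFun, intFun]
  split_ifs with h₁ h₂ h₂
  · rw [← EReal.coe_sub, EReal.coe_le_coe_iff, ← integral_sub (integrable_inner_of_memLp hx hx')
      h₁.2]
    refine integral_mono_ae ((integrable_inner_of_memLp hx hx').sub h₁.2) h₂.2 ?_
    filter_upwards [h₁.1, h₂.1] with ω hfx hconj
    have hFY := (hf ω).inner_sub_le_conjFn hfx (x' ω)
    rw [← EReal.coe_toReal hconj (ne_bot_of_le_ne_bot (EReal.coe_ne_bot _) hFY),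
      EReal.coe_le_coe_iff] at hFY
    exact hFY
  · exact le_top
  all_goals exact (EReal.sub_top _).trans_le bot_le

theorem aemeasurable_moreauEnv_sub (hf : ∀ ω, ProperLscConvex (f ω))
    (hP : ∀ ω u, IsProxPt 1 (f ω) u (P ω u))
    (hPmeas : ∀ x : Ω → H, MemLp x 2 μ → AEStronglyMeasurable (fun ω => P ω (x ω)) μ)
    {u w : Ω → H} (hu : MemLp u 2 μ) (hw : MemLp w 2 μ) :
    AEMeasurable (fun ω => moreauEnv (f ω) (P ω) (u ω) - moreauEnv (f ω) (P ω) (w ω)) μ := by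
  set S : ℕ → Ω → ℝ := fun n ω => ∑ i ∈ Finset.range (n + 1),
    ⟪((n + 1 : ℕ) : ℝ)⁻¹ • (u ω - w ω), (w ω + (i / (n + 1 : ℕ) : ℝ) • (u ω - w ω))
      - P ω (w ω + (i / (n + 1 : ℕ) : ℝ) • (u ω - w ω))⟫
  have hS : ∀ n, AEMeasurable (S n) μ := fun n => Finset.aemeasurable_fun_sum _ fun i _ => by
    have hγ : MemLp (fun ω => w ω + (i / (n + 1 : ℕ) : ℝ) • (u ω - w ω)) 2 μ :=
      hw.add ((hu.sub hw).const_smul _)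
    exact (((hu.sub hw).const_smul _).1.inner (hγ.1.sub (hPmeas _ hγ))).aemeasurable
  refine aemeasurable_of_tendsto_metrizable_ae atTop hS (Eventually.of_forall fun ω => ?_)
  have hlim : Tendsto (fun n : ℕ => ‖u ω - w ω‖ ^ 2 / (2 * ((n + 1 : ℕ) : ℝ))) atTop (𝓝 0) := by
    refine ((tendsto_const_div_atTop_nhds_zero_nat (‖u ω - w ω‖ ^ 2 / 2)).comp
      (tendsto_add_atTop_nat 1)).congr fun n => ?_
    simp only [Function.comp_apply, div_div, Nat.cast_add, Nat.cast_one]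
  refine tendsto_iff_dist_tendsto_zero.2 (squeeze_zero (fun n => dist_nonneg) (fun n => ?_) hlim)
  rw [Real.dist_eq, abs_sub_comm]
  exact (hf ω).abs_moreauEnv_sub_sub_sum_le (hP ω) (w ω) (u ω) n.succ_pos

theorem aemeasurable_moreauEnv [SigmaFinite μ] [CompleteSpace H] [SecondCountableTopology H]
    (hf : ∀ ω, ProperLscConvex (f ω)) (hP : ∀ ω u, IsProxPt 1 (f ω) u (P ω u))
    (hPmeas : ∀ x : Ω → H, MemLp x 2 μ → AEStronglyMeasurable (fun ω => P ω (x ω)) μ)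
    (hr : ∃ r : Ω → H, MemLp r 2 μ ∧ (∀ᵐ ω ∂μ, f ω (r ω) ≠ ⊤) ∧
      Integrable (fun ω => (f ω (r ω)).toReal) μ)
    {u : Ω → H} (hu : MemLp u 2 μ) :
    AEMeasurable (fun ω => moreauEnv (f ω) (P ω) (u ω)) μ := by
  obtain ⟨r, hr2, hrtop, hri⟩ := hr
  obtain ⟨e, he, hdense⟩ := exists_memLp_seq_denseRange (μ := μ) (E := H) (p := 2)
  have hsup : AEMeasurable (fun ω => ⨆ n, (moreauEnv (f ω) (P ω) (r ω + e n ω)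
      - moreauEnv (f ω) (P ω) (r ω) - ‖e n ω‖ ^ 2 / 2)) μ :=
    AEMeasurable.iSup fun n => (aemeasurable_moreauEnv_sub hf hP hPmeas (hr2.add (he n)) hr2).sub
      (((he n).1.norm.aemeasurable.pow_const 2).div_const 2)
  have henv : AEMeasurable (fun ω => moreauEnv (f ω) (P ω) (r ω)) μ := by
    refine (hri.aemeasurable.sub hsup).congr ?_
    filter_upwards [hrtop] with ω hω
    rw [Pi.sub_apply, (hf ω).ciSup_moreauEnv_add_sub (hP ω) (hdense ω) hω]
    ring
  exact ((aemeasurable_moreauEnv_sub hf hP hPmeas hu hr2).add henv).congr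
    (Eventually.of_forall fun ω => sub_add_cancel _ _)

theorem aemeasurable_toReal_comp_prox [SigmaFinite μ] [CompleteSpace H]
    [SecondCountableTopology H] (hf : ∀ ω, ProperLscConvex (f ω))
    (hP : ∀ ω u, IsProxPt 1 (f ω) u (P ω u))
    (hPmeas : ∀ x : Ω → H, MemLp x 2 μ → AEStronglyMeasurable (fun ω => P ω (x ω)) μ)
    (hr : ∃ r : Ω → H, MemLp r 2 μ ∧ (∀ᵐ ω ∂μ, f ω (r ω) ≠ ⊤) ∧
      Integrable (fun ω => (f ω (r ω)).toReal) μ)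
    {u : Ω → H} (hu : MemLp u 2 μ) :
    AEMeasurable (fun ω => (f ω (P ω (u ω))).toReal) μ :=
  ((aemeasurable_moreauEnv hf hP hPmeas hr hu).sub
    (((hu.1.sub (hPmeas u hu)).norm.aemeasurable.pow_const 2).div_const 2)).congr
    (Eventually.of_forall fun _ => add_sub_cancel_right _ _)

theorem memLp_prox (hf : ∀ ω, ProperLscConvex (f ω)) (hP : ∀ ω u, IsProxPt 1 (f ω) u (P ω u))
    (hPmeas : ∀ x : Ω → H, MemLp x 2 μ → AEStronglyMeasurable (fun ω => P ω (x ω)) μ)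
    (hr : ∃ r : Ω → H, MemLp r 2 μ ∧ (∀ᵐ ω ∂μ, f ω (r ω) ≠ ⊤) ∧
      Integrable (fun ω => (f ω (r ω)).toReal) μ)
    (hmin : ∃ s : Ω → H, MemLp s 2 μ ∧ ∃ θ : Ω → ℝ, Integrable θ μ ∧
      ∀ᵐ ω ∂μ, ∀ u : H, ((⟪u, s ω⟫ + θ ω : ℝ) : EReal) ≤ f ω u)
    {u : Ω → H} (hu : MemLp u 2 μ) : MemLp (fun ω => P ω (u ω)) 2 μ := by
  obtain ⟨r, hr2, hrtop, hri⟩ := hr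
  obtain ⟨s, hs2, θ, hθ, hmin⟩ := hmin
  have hPr : MemLp (fun ω => P ω (r ω) - r ω) 2 μ := by
    refine (memLp_two_iff_integrable_sq_norm ((hPmeas r hr2).sub hr2.1)).2 <|
      ((((hri.abs.add hθ.abs).add (hr2.norm.integrable_mul hs2.norm)).add
        hs2.norm.integrable_sq).const_mul 4).mono'
        (((hPmeas r hr2).sub hr2.1).norm.aemeasurable.pow_const 2).aestronglyMeasurable ?_
    filter_upwards [hrtop, hmin] with ω hω hmω
    have hprox := (hf ω).moreauEnv_le (hP ω) (r ω) hω
    set p := P ω (r ω)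
    have hlow : ⟪p, s ω⟫ + θ ω ≤ (f ω p).toReal := by
      rw [← EReal.coe_le_coe_iff, (hf ω).coe_toReal ((hf ω).prox_ne_top (hP ω) _)]
      exact hmω p
    have hp : ‖p‖ ≤ ‖r ω‖ + ‖p - r ω‖ := by simpa using norm_add_le (r ω) (p - r ω)
    rw [moreauEnv, sub_self, norm_zero, norm_sub_rev] at hprox
    simp only [Pi.add_apply, Pi.mul_apply, Pi.sub_apply]
    rw [Real.norm_eq_abs, abs_of_nonneg (by positivity)]
    nlinarith [neg_abs_le (θ ω), le_abs_self (f ω (r ω)).toReal, real_inner_le_norm p (s ω),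
      neg_le_of_abs_le (abs_real_inner_le_norm p (s ω)), norm_nonneg (s ω),
      mul_le_mul_of_nonneg_right hp (norm_nonneg (s ω)), sq_nonneg (‖p - r ω‖ - 2 * ‖s ω‖)]
  have hPr' : MemLp (fun ω => P ω (r ω)) 2 μ :=
    (hPr.add hr2).ae_eq (Eventually.of_forall fun ω => sub_add_cancel _ _)
  refine (hPr'.norm.add (hu.sub hr2).norm).of_le (hPmeas u hu) (Eventually.of_forall fun ω => ?_)
  simp only [Pi.add_apply, Pi.sub_apply, Real.norm_eq_abs]
  rw [abs_of_nonneg (by positivity)]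
  linarith [norm_le_insert' (P ω (u ω)) (P ω (r ω)), (hf ω).norm_prox_sub_le (hP ω) (u ω) (r ω)]

theorem integrable_toReal_comp_prox [SigmaFinite μ] [CompleteSpace H]
    [SecondCountableTopology H] (hf : ∀ ω, ProperLscConvex (f ω))
    (hP : ∀ ω u, IsProxPt 1 (f ω) u (P ω u))
    (hPmeas : ∀ x : Ω → H, MemLp x 2 μ → AEStronglyMeasurable (fun ω => P ω (x ω)) μ)
    (hr : ∃ r : Ω → H, MemLp r 2 μ ∧ (∀ᵐ ω ∂μ, f ω (r ω) ≠ ⊤) ∧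
      Integrable (fun ω => (f ω (r ω)).toReal) μ)
    (hmin : ∃ s : Ω → H, MemLp s 2 μ ∧ ∃ θ : Ω → ℝ, Integrable θ μ ∧
      ∀ᵐ ω ∂μ, ∀ u : H, ((⟪u, s ω⟫ + θ ω : ℝ) : EReal) ≤ f ω u)
    {u : Ω → H} (hu : MemLp u 2 μ) : Integrable (fun ω => (f ω (P ω (u ω))).toReal) μ := by
  have hPu := memLp_prox hf hP hPmeas hr hmin hu
  have hmeas := (aemeasurable_toReal_comp_prox hf hP hPmeas hr hu).aestronglyMeasurable
  obtain ⟨r, hr2, hrtop, hri⟩ := hr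
  obtain ⟨s, hs2, θ, hθ, hmin⟩ := hmin
  refine (((hri.abs.add ((hu.sub hr2).norm.integrable_sq.div_const 2)).add
    (hPu.norm.integrable_mul hs2.norm)).add hθ.abs).mono' hmeas ?_
  filter_upwards [hrtop, hmin] with ω hω hmω
  have hup := (hf ω).moreauEnv_le (hP ω) (u ω) hω
  have hlow : ⟪P ω (u ω), s ω⟫ + θ ω ≤ (f ω (P ω (u ω))).toReal := by
    rw [← EReal.coe_le_coe_iff, (hf ω).coe_toReal ((hf ω).prox_ne_top (hP ω) _)]
    exact hmω _
  rw [moreauEnv] at hup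
  simp only [Pi.add_apply, Pi.mul_apply, Pi.sub_apply]
  rw [Real.norm_eq_abs, abs_le]
  constructor <;> nlinarith [neg_abs_le (θ ω), le_abs_self (θ ω), le_abs_self (f ω (r ω)).toReal,
    neg_le_of_abs_le (abs_real_inner_le_norm (P ω (u ω)) (s ω)),
    abs_nonneg (f ω (r ω)).toReal, sq_nonneg ‖u ω - r ω‖, sq_nonneg ‖u ω - P ω (u ω)‖,
    mul_nonneg (norm_nonneg (P ω (u ω))) (norm_nonneg (s ω))]

theorem integral_inner_sub_intFun_comp_prox [SigmaFinite μ] [CompleteSpace H]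
    [SecondCountableTopology H] (hf : ∀ ω, ProperLscConvex (f ω))
    (hP : ∀ ω u, IsProxPt 1 (f ω) u (P ω u))
    (hPmeas : ∀ x : Ω → H, MemLp x 2 μ → AEStronglyMeasurable (fun ω => P ω (x ω)) μ)
    (hr : ∃ r : Ω → H, MemLp r 2 μ ∧ (∀ᵐ ω ∂μ, f ω (r ω) ≠ ⊤) ∧
      Integrable (fun ω => (f ω (r ω)).toReal) μ)
    (hmin : ∃ s : Ω → H, MemLp s 2 μ ∧ ∃ θ : Ω → ℝ, Integrable θ μ ∧
      ∀ᵐ ω ∂μ, ∀ u : H, ((⟪u, s ω⟫ + θ ω : ℝ) : EReal) ≤ f ω u)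
    {u x' : Ω → H} (hu : MemLp u 2 μ) (hx' : MemLp x' 2 μ) :
    ((∫ ω, ⟪P ω (u ω), x' ω⟫ ∂μ : ℝ) : EReal) - intFun μ f (fun ω => P ω (u ω))
      = ((∫ ω, ⟪P ω (u ω), x' ω⟫ - (f ω (P ω (u ω))).toReal ∂μ : ℝ) : EReal) := by
  have hfPu := integrable_toReal_comp_prox hf hP hPmeas hr hmin hu
  rw [intFun, if_pos ⟨Eventually.of_forall fun ω => (hf ω).prox_ne_top (hP ω) _, hfPu⟩,
    ← EReal.coe_sub, integral_sub
      (integrable_inner_of_memLp (memLp_prox hf hP hPmeas hr hmin hu) hx') hfPu]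

end IntegralFunctional

theorem conjugate_of_integral_functional
    {Ω H : Type*} [MeasurableSpace Ω] {μ : Measure Ω} [SigmaFinite μ]
    [NormedAddCommGroup H] [InnerProductSpace ℝ H] [CompleteSpace H]
    [SecondCountableTopology H]
    (f : Ω → H → EReal) (hf : ∀ ω, ProperLscConvex (f ω))
    (P : Ω → H → H) (hP : ∀ ω u, IsProxPt 1 (f ω) u (P ω u))
    (hPmeas : ∀ x : Ω → H, MemLp x 2 μ →
      AEStronglyMeasurable (fun ω => P ω (x ω)) μ)
    (hr : ∃ r : Ω → H, MemLp r 2 μ ∧ (∀ᵐ ω ∂μ, f ω (r ω) ≠ ⊤) ∧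
      Integrable (fun ω => (f ω (r ω)).toReal) μ)
    (hmin : ∃ s : Ω → H, MemLp s 2 μ ∧ ∃ θ : Ω → ℝ, Integrable θ μ ∧
      ∀ᵐ ω ∂μ, ∀ u : H, ((⟪u, s ω⟫ + θ ω : ℝ) : EReal) ≤ f ω u)
    (x' : Ω → H) (hx' : MemLp x' 2 μ) :
    (⨆ x : { x : Ω → H // MemLp x 2 μ },
        ((∫ ω, ⟪x.1 ω, x' ω⟫ ∂μ : ℝ) : EReal) - intFun μ f x.1)
      = intFun μ (fun ω u => conjFn (f ω) u) x' := by
  refine le_antisymm (iSup_le fun x => integral_inner_sub_intFun_le hf x.2 hx') ?_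
  obtain ⟨e, he, hdense⟩ := exists_memLp_seq_denseRange (μ := μ) (E := H) (p := 2)
  set g : Ω → H → ℝ := fun ω u => ⟪P ω u, x' ω⟫ - (f ω (P ω u)).toReal
  have hg : ∀ D, MemLp D 2 μ → Integrable (fun ω => g ω (D ω)) μ := fun D hD =>
    (integrable_inner_of_memLp (memLp_prox hf hP hPmeas hr hmin hD) hx').sub
      (integrable_toReal_comp_prox hf hP hPmeas hr hmin hD)
  obtain ⟨D, hD, hDe⟩ :=
    exists_memLp_seq_ae_eq_partialSups (fun D hD => (hg D hD).aemeasurable) he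
  have hmono : ∀ᵐ ω ∂μ, Monotone fun n => g ω (D n ω) := by
    filter_upwards [ae_all_iff.2 hDe] with ω hω
    simpa only [hω] using partialSups_monotone _
  have hsup : ∀ᵐ ω ∂μ, ⨆ n, (g ω (D n ω) : EReal) = conjFn (f ω) (x' ω) := by
    filter_upwards [ae_all_iff.2 hDe] with ω hω
    simp only [hω, iSup_coe_partialSups]
    exact (hf ω).iSup_inner_prox_sub_eq_conjFn (hP ω) (hdense ω) (x' ω)
  rw [← iSup_integral_eq_intFun (fun n => hg _ (hD n)) hmono hsup]
  refine iSup_le fun n => le_iSup_of_le ⟨_, memLp_prox hf hP hPmeas hr hmin (hD n)⟩ ?_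
  exact (integral_inner_sub_intFun_comp_prox hf hP hPmeas hr hmin (hD n) hx').ge
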